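/- Let S be a nonempty compact Hausdorff semigroup with continuous right translations x ↦ x·a, let I be a minimal left ideal, and let i ∈ I be an idempotent. Then i·I is a group with identity element i, and I is the disjoint union of the sets i·I over the idempotents i ∈ I. -/

import Mathlib

/-!
For `x ∈ I` both `S * x` and `I * x` are left ideals inside `I`, so by minimality they equal `I`.
The first fact gives every element of `j * I` a left inverse there, which makes `j * I` a group;
two such groups meeting in a point share their identity, so they are disjoint or equal.
The second fact makes `{a ∈ I | a * x = x}` a nonempty closed subsemigroup of the compact set `I`,
and an idempotent in it (Ellis–Numakura) is a `j` with `x = j * x ∈ j * I`.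
-/

/-- A left ideal of a semigroup (viewed as the whole type): a nonempty subset
closed under multiplication on the left by arbitrary elements. -/
def IsLeftIdeal {S : Type*} [Semigroup S] (I : Set S) : Prop :=
  I.Nonempty ∧ ∀ s : S, ∀ x ∈ I, s * x ∈ I

/-- A minimal left ideal: a left ideal containing no proper left ideal. -/
def IsMinimalLeftIdeal {S : Type*} [Semigroup S] (I : Set S) : Prop :=
  IsLeftIdeal I ∧ ∀ J : Set S, J ⊆ I → IsLeftIdeal J → J = I

section

variable {S : Type*} [Semigroup S]

structure IsGroupWithIdentity (G : Set S) (e : S) : Prop where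
  identity_mem : e ∈ G
  mul_mem : ∀ x ∈ G, ∀ y ∈ G, x * y ∈ G
  identity_mul : ∀ x ∈ G, e * x = x
  mul_identity : ∀ x ∈ G, x * e = x
  exists_inverse : ∀ x ∈ G, ∃ y ∈ G, x * y = e ∧ y * x = e

namespace IsGroupWithIdentity

theorem of_left {G : Set S} {e : S} (he : e ∈ G) (hmul : ∀ x ∈ G, ∀ y ∈ G, x * y ∈ G)
    (hleft_id : ∀ x ∈ G, e * x = x) (hleft_inv : ∀ x ∈ G, ∃ y ∈ G, y * x = e) :
    IsGroupWithIdentity G e := by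
  have hinv : ∀ x ∈ G, ∃ y ∈ G, x * y = e ∧ y * x = e := by
    intro x hx
    obtain ⟨y, hy, hyx⟩ := hleft_inv x hx
    obtain ⟨z, -, hzy⟩ := hleft_inv y hy
    refine ⟨y, hy, ?_, hyx⟩
    calc x * y = (z * y) * (x * y) := by rw [hzy, hleft_id _ (hmul x hx y hy)]
      _ = z * ((y * x) * y) := by simp only [mul_assoc]
      _ = e := by rw [hyx, hleft_id y hy, hzy]
  refine ⟨he, hmul, hleft_id, fun x hx => ?_, hinv⟩
  obtain ⟨y, -, hxy, hyx⟩ := hinv x hx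
  rw [← hyx, ← mul_assoc, hxy, hleft_id x hx]

theorem identity_eq {G H : Set S} {j k y : S} (hG : IsGroupWithIdentity G j)
    (hH : IsGroupWithIdentity H k) (hyG : y ∈ G) (hyH : y ∈ H) : j = k := by
  obtain ⟨v, -, -, hvy⟩ := hG.exists_inverse y hyG
  obtain ⟨w, -, hyw, -⟩ := hH.exists_inverse y hyH
  calc j = v * y * k := by rw [mul_assoc, hH.mul_identity y hyH, hvy]
    _ = j * (y * w) := by rw [hvy, hyw]
    _ = k := by rw [← mul_assoc, hG.identity_mul y hyG, hyw]

end IsGroupWithIdentity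

namespace IsMinimalLeftIdeal

variable {I : Set S}

theorem range_mul_right_eq (hI : IsMinimalLeftIdeal I) {x : S} (hx : x ∈ I) :
    Set.range (· * x) = I := by
  refine hI.2 _ ?_ ⟨⟨x * x, x, rfl⟩, ?_⟩
  · rintro _ ⟨s, rfl⟩
    exact hI.1.2 s x hx
  · rintro s _ ⟨t, rfl⟩
    exact ⟨s * t, mul_assoc s t x⟩

theorem exists_mul_eq (hI : IsMinimalLeftIdeal I) {x y : S} (hx : x ∈ I) (hy : y ∈ I) :
    ∃ s, s * x = y := by
  rwa [← hI.range_mul_right_eq hx] at hy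

theorem image_mul_right_eq (hI : IsMinimalLeftIdeal I) {x : S} (hx : x ∈ I) :
    (· * x) '' I = I := by
  refine hI.2 _ ?_ ⟨⟨x * x, x, hx, rfl⟩, ?_⟩
  · rintro _ ⟨p, -, rfl⟩
    exact hI.1.2 p x hx
  · rintro s _ ⟨p, hp, rfl⟩
    exact ⟨s * p, hI.1.2 s p hp, mul_assoc s p x⟩

theorem isGroupWithIdentity_image_mul_left (hI : IsMinimalLeftIdeal I) {j : S} (hj : j ∈ I)
    (hjj : j * j = j) : IsGroupWithIdentity ((j * ·) '' I) j := by
  have hleft_id : ∀ x ∈ (j * ·) '' I, j * x = x := by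
    rintro _ ⟨p, -, rfl⟩
    rw [← mul_assoc, hjj]
  refine .of_left ⟨j, hj, hjj⟩ ?_ hleft_id ?_
  · rintro _ ⟨p, -, rfl⟩ _ ⟨q, hq, rfl⟩
    exact ⟨p * (j * q), hI.1.2 p _ (hI.1.2 j q hq), by simp only [mul_assoc]⟩
  · rintro _ ⟨p, hp, rfl⟩
    obtain ⟨s, hs⟩ := hI.exists_mul_eq (hI.1.2 j p hp) hj
    refine ⟨j * (s * j), ⟨s * j, hI.1.2 s j hj, rfl⟩, ?_⟩
    calc j * (s * j) * (j * p) = j * (s * (j * (j * p))) := by simp only [mul_assoc]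
      _ = j := by rw [hleft_id _ ⟨p, hp, rfl⟩, hs, hjj]

theorem isCompact [TopologicalSpace S] [CompactSpace S]
    (hcont : ∀ a : S, Continuous (· * a)) (hI : IsMinimalLeftIdeal I) : IsCompact I := by
  obtain ⟨x, hx⟩ := hI.1.1
  rw [← hI.range_mul_right_eq hx, ← Set.image_univ]
  exact isCompact_univ.image (hcont x)

theorem exists_idempotent_mul_eq [TopologicalSpace S] [CompactSpace S] [T2Space S]
    (hcont : ∀ a : S, Continuous (· * a)) (hI : IsMinimalLeftIdeal I) {x : S} (hx : x ∈ I) :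
    ∃ j ∈ I, j * j = j ∧ j * x = x := by
  have hne : {a ∈ I | a * x = x}.Nonempty := by
    rw [← hI.image_mul_right_eq hx] at hx
    obtain ⟨e, he, hex⟩ := hx
    exact ⟨e, he, hex⟩
  have hcompact : IsCompact {a ∈ I | a * x = x} :=
    (hI.isCompact hcont).inter_right (isClosed_singleton.preimage (hcont x))
  obtain ⟨j, ⟨hj, hjx⟩, hjj⟩ := exists_idempotent_in_compact_subsemigroup hcont _ hne hcompact
    (fun a ⟨_, hax⟩ b ⟨hb, hbx⟩ => ⟨hI.1.2 a b hb, by rw [mul_assoc, hbx, hax]⟩)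
  exact ⟨j, hj, hjj, hjx⟩

theorem eq_biUnion_image_mul_left [TopologicalSpace S] [CompactSpace S] [T2Space S]
    (hcont : ∀ a : S, Continuous (· * a)) (hI : IsMinimalLeftIdeal I) :
    I = ⋃ j ∈ {j ∈ I | j * j = j}, (j * ·) '' I := by
  refine subset_antisymm (fun x hx => ?_) (Set.iUnion₂_subset fun j hj => ?_)
  · obtain ⟨j, hj, hjj, hjx⟩ := hI.exists_idempotent_mul_eq hcont hx
    exact Set.mem_biUnion ⟨hj, hjj⟩ ⟨x, hx, hjx⟩
  · rintro _ ⟨p, hp, rfl⟩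
    exact hI.1.2 j p hp

end IsMinimalLeftIdeal

end

theorem stmt12_general {S : Type*} [Semigroup S] [TopologicalSpace S]
    [CompactSpace S] [T2Space S]
    (hcont : ∀ a : S, Continuous fun x : S => x * a)
    (I : Set S) (hI : IsMinimalLeftIdeal I)
    (i : S) (hiI : i ∈ I) (hidem : i * i = i) :
    -- i • I is a group with identity i:
    (i ∈ (fun p => i * p) '' I) ∧
    (∀ x ∈ (fun p => i * p) '' I, ∀ y ∈ (fun p => i * p) '' I,
      x * y ∈ (fun p => i * p) '' I) ∧
    (∀ x ∈ (fun p => i * p) '' I, i * x = x ∧ x * i = x) ∧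
    (∀ x ∈ (fun p => i * p) '' I, ∃ y ∈ (fun p => i * p) '' I,
      x * y = i ∧ y * x = i) ∧
    -- I is the disjoint union of the sets j • I over idempotents j ∈ I:
    (I = ⋃ j ∈ {j ∈ I | j * j = j}, (fun p => j * p) '' I) ∧
    (∀ j ∈ I, j * j = j → ∀ k ∈ I, k * k = k → j ≠ k →
      Disjoint ((fun p => j * p) '' I) ((fun p => k * p) '' I)) := by
  have hgroup := hI.isGroupWithIdentity_image_mul_left hiI hidem
  refine ⟨hgroup.identity_mem, hgroup.mul_mem,
    fun x hx => ⟨hgroup.identity_mul x hx, hgroup.mul_identity x hx⟩, hgroup.exists_inverse,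
    hI.eq_biUnion_image_mul_left hcont, ?_⟩
  intro j hj hjj k hk hkk hjk
  refine Set.disjoint_left.2 fun y hyj hyk => hjk ?_
  exact (hI.isGroupWithIdentity_image_mul_left hj hjj).identity_eq
    (hI.isGroupWithIdentity_image_mul_left hk hkk) hyj hyk

theorem stmt12 {S : Type*} [Nonempty S] [Semigroup S] [TopologicalSpace S]
    [CompactSpace S] [T2Space S]
    (hcont : ∀ a : S, Continuous fun x : S => x * a)
    (I : Set S) (hI : IsMinimalLeftIdeal I)
    (i : S) (hiI : i ∈ I) (hidem : i * i = i) :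
    -- i • I is a group with identity i:
    (i ∈ (fun p => i * p) '' I) ∧
    (∀ x ∈ (fun p => i * p) '' I, ∀ y ∈ (fun p => i * p) '' I,
      x * y ∈ (fun p => i * p) '' I) ∧
    (∀ x ∈ (fun p => i * p) '' I, i * x = x ∧ x * i = x) ∧
    (∀ x ∈ (fun p => i * p) '' I, ∃ y ∈ (fun p => i * p) '' I,
      x * y = i ∧ y * x = i) ∧
    -- I is the disjoint union of the sets j • I over idempotents j ∈ I:
    (I = ⋃ j ∈ {j ∈ I | j * j = j}, (fun p => j * p) '' I) ∧
    (∀ j ∈ I, j * j = j → ∀ k ∈ I, k * k = k → j ≠ k →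
      Disjoint ((fun p => j * p) '' I) ((fun p => k * p) '' I)) :=
  stmt12_general hcont I hI i hiI hidem
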